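/- The fiber gradient maps w ↦ e^{w-K_q(w)} - 1 (from q-centered random variables to {η : E_q[η]=0, η>-1}) and η ↦ log(1+η) - E_q[log(1+η)] are mutually inverse bijections. -/

import Mathlib

/-! Since `1 + Fmap q w = e^w / E_q[e^w]` and `Gmap q η = log (1 + η) - E_q[log (1 + η)]`, the
composite `Gmap ∘ Fmap` just centers `w`, while `Fmap ∘ Gmap` sends `η` to `(1 + η) / E_q[1 + η] - 1`;
both are the identity on centered inputs. -/

open Real Finset

noncomputable def Ex {Ω : Type*} [Fintype Ω] (p f : Ω → ℝ) : ℝ :=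
  (∑ x, f x * p x) / (Fintype.card Ω : ℝ)

noncomputable def Kp {Ω : Type*} [Fintype Ω] (p : Ω → ℝ) (u : Ω → ℝ) : ℝ :=
  Real.log (Ex p (fun x => Real.exp (u x)))

/-- Fiber gradient of the cumulant Lagrangian. -/
noncomputable def Fmap {Ω : Type*} [Fintype Ω] (q w : Ω → ℝ) : Ω → ℝ :=
  fun x => Real.exp (w x - Kp q w) - 1

/-- Fiber gradient of the conjugate Hamiltonian. -/
noncomputable def Gmap {Ω : Type*} [Fintype Ω] (q η : Ω → ℝ) : Ω → ℝ :=
  fun x => Real.log (1 + η x) - Ex q (fun y => Real.log (1 + η y))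

section Expectation

variable {Ω : Type*} [Fintype Ω] (q : Ω → ℝ)

lemma Ex_add (f g : Ω → ℝ) : Ex q (fun x => f x + g x) = Ex q f + Ex q g := by
  simp only [Ex, add_mul, sum_add_distrib, add_div]

lemma Ex_sub (f g : Ω → ℝ) : Ex q (fun x => f x - g x) = Ex q f - Ex q g := by
  simp only [Ex, sub_mul, sum_sub_distrib, sub_div]

lemma Ex_const_mul (c : ℝ) (f : Ω → ℝ) : Ex q (fun x => c * f x) = c * Ex q f := by
  simp only [Ex, mul_assoc, ← mul_sum, mul_div_assoc]

lemma Ex_const {q : Ω → ℝ} (hqd : Ex q (fun _ => 1) = 1) (c : ℝ) : Ex q (fun _ => c) = c := by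
  simpa [hqd] using Ex_const_mul q c (fun _ => 1)

lemma Ex_pos [Nonempty Ω] {q f : Ω → ℝ} (hq : ∀ x, 0 < q x) (hf : ∀ x, 0 < f x) :
    0 < Ex q f :=
  div_pos (sum_pos (fun x _ => mul_pos (hf x) (hq x)) univ_nonempty)
    (Nat.cast_pos.mpr Fintype.card_pos)

end Expectation

section FiberGradients

variable {Ω : Type*} [Fintype Ω] {q : Ω → ℝ}

lemma exp_Kp [Nonempty Ω] (hq : ∀ x, 0 < q x) (w : Ω → ℝ) :
    exp (Kp q w) = Ex q (fun x => exp (w x)) :=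
  exp_log (Ex_pos hq fun x => exp_pos (w x))

lemma neg_one_lt_Fmap (w : Ω → ℝ) (x : Ω) : -1 < Fmap q w x := by
  simpa [Fmap] using exp_pos (w x - Kp q w)

lemma log_one_add_Fmap (w : Ω → ℝ) (x : Ω) : log (1 + Fmap q w x) = w x - Kp q w := by
  simp [Fmap]

lemma Fmap_eq_div [Nonempty Ω] (hq : ∀ x, 0 < q x) (w : Ω → ℝ) :
    Fmap q w = fun x => exp (w x) / Ex q (fun y => exp (w y)) - 1 := by
  funext x
  rw [Fmap, exp_sub, exp_Kp hq]

lemma Ex_Fmap [Nonempty Ω] (hq : ∀ x, 0 < q x) (hqd : Ex q (fun _ => 1) = 1) (w : Ω → ℝ) :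
    Ex q (Fmap q w) = 0 := by
  have hpos : 0 < Ex q (fun y => exp (w y)) := Ex_pos hq fun y => exp_pos (w y)
  simp only [Fmap_eq_div hq, div_eq_inv_mul]
  rw [Ex_sub, Ex_const_mul, Ex_const hqd, inv_mul_cancel₀ hpos.ne', sub_self]

lemma Gmap_Fmap (hqd : Ex q (fun _ => 1) = 1) (w : Ω → ℝ) :
    Gmap q (Fmap q w) = fun x => w x - Ex q w := by
  funext x
  simp only [Gmap, log_one_add_Fmap]
  rw [Ex_sub, Ex_const hqd]
  ring

lemma Ex_Gmap (hqd : Ex q (fun _ => 1) = 1) (η : Ω → ℝ) : Ex q (Gmap q η) = 0 := by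
  unfold Gmap
  rw [Ex_sub, Ex_const hqd, sub_self]

lemma Fmap_Gmap [Nonempty Ω] (hq : ∀ x, 0 < q x) (hqd : Ex q (fun _ => 1) = 1) {η : Ω → ℝ}
    (hη : ∀ x, -1 < η x) : Fmap q (Gmap q η) = fun x => (1 + η x) / (1 + Ex q η) - 1 := by
  set c := Ex q (fun y => log (1 + η y))
  have hexp : ∀ y, exp (Gmap q η y) = exp (-c) * (1 + η y) := fun y => by
    rw [Gmap, exp_sub, exp_log (by linarith [hη y]), exp_neg]
    ring
  rw [Fmap_eq_div hq]
  funext x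
  simp only [hexp]
  rw [Ex_const_mul, Ex_add, Ex_const hqd, mul_div_mul_left _ _ (exp_pos _).ne']

end FiberGradients

theorem stmt17 {Ω : Type*} [Fintype Ω] [Nonempty Ω]
    (q : Ω → ℝ) (hq : ∀ x, 0 < q x) (hqd : Ex q (fun _ => 1) = 1) :
    (∀ w : Ω → ℝ, Ex q w = 0 →
      Ex q (Fmap q w) = 0 ∧ (∀ x, -1 < Fmap q w x) ∧ Gmap q (Fmap q w) = w) ∧
    (∀ η : Ω → ℝ, Ex q η = 0 → (∀ x, -1 < η x) →
      Ex q (Gmap q η) = 0 ∧ Fmap q (Gmap q η) = η) := by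
  refine ⟨fun w hw => ⟨Ex_Fmap hq hqd w, neg_one_lt_Fmap w, ?_⟩,
    fun η hη hη1 => ⟨Ex_Gmap hqd η, ?_⟩⟩
  · simp [Gmap_Fmap hqd, hw]
  · simp [Fmap_Gmap hq hqd hη1, hη]
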